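/- With M and S the (N−1)×(N−1) mass and stiffness matrices, the last two rows of MS satisfy: (MS)_{(N−2)n} = δ_{(N−2)n} + (1/4)·√((2n+1)/(2N−3))·(n(n+1)/(2N−1))·(1+(−1)^{n+N}) and (MS)_{(N−1)n} = δ_{(N−1)n} + (1/4)·√((2n+1)/(2N−1))·(n(n+1)/(2N+1))·(1+(−1)^{n+N+1}) for 1 ≤ n ≤ N−1. -/

import Mathlib

open Polynomial

/-- The Legendre polynomial of degree `n` (Rodrigues formula). -/
noncomputable def legendre (n : ℕ) : Polynomial ℝ :=
  C ((1 : ℝ) / (2 ^ n * n.factorial)) * derivative^[n] ((X ^ 2 - 1) ^ n)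

/-- `ψ_{m+1}(ξ) = (1/√(2(2m+1))) (L_{m+1}(ξ) − L_{m−1}(ξ))`. -/
noncomputable def psiF (m : ℕ) (x : ℝ) : ℝ :=
  (Real.sqrt (2 * (2 * (m : ℝ) + 1)))⁻¹ *
    ((legendre (m + 1)).eval x - (legendre (m - 1)).eval x)

/-- The normalized Legendre function `φ_m(ξ) = √((2m+1)/2) L_m(ξ)`. -/
noncomputable def phiF (m : ℕ) (x : ℝ) : ℝ :=
  Real.sqrt ((2 * (m : ℝ) + 1) / 2) * (legendre m).eval x

/-- The `(N−1)×(N−1)` mass matrix `M_{mn} = ∫ ψ_{n+1} ψ_{m+1}`,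
with index `i : Fin (N−1)` corresponding to `m = i + 1`. -/
noncomputable def massMatrix (N : ℕ) : Matrix (Fin (N - 1)) (Fin (N - 1)) ℝ :=
  Matrix.of fun i j => ∫ x in (-1 : ℝ)..1, psiF ((j : ℕ) + 1) x * psiF ((i : ℕ) + 1) x

/-- The `(N−1)×(N−1)` stiffness matrix `S_{mn} = ∫ φ_n' φ_m'`. -/
noncomputable def stiffMatrix (N : ℕ) : Matrix (Fin (N - 1)) (Fin (N - 1)) ℝ :=
  Matrix.of fun i j =>
    ∫ x in (-1 : ℝ)..1, deriv (phiF ((j : ℕ) + 1)) x * deriv (phiF ((i : ℕ) + 1)) x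

/-!
Write `G a b = ∫ (L_{b+2} - L_b)(L_{a+2} - L_a)` and `I p q = ∫ L_p' L_q'` (all integrals over
`[-1, 1]`, indices `0`-based as in `Fin (N - 1)`). Since `ψ_{k+1} ∝ L_{k+2} - L_k` and
`φ_{k+1}' ∝ L_{k+1}'` with reciprocal normalising constants (up to the factor `1/2`), the `k`-th
term of `(MS)_{ij}` is `¼ √((2j+3)/(2i+3)) G i k · I (k+1) (j+1)`.
Rodrigues' formula and repeated integration by parts give the orthogonality of the `L_n`, so `G`
is penta-diagonal, and one more integration by parts with the values of `L_n` and `L_n'` at `±1`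
gives `I p q = min(p,q) (min(p,q)+1)/2 · (1 + (-1)^{p+q})`. In the last two rows the column
`k = i + 2` lies outside the matrix, so only `k = i` and `k = i - 2` contribute, and the claim
becomes a rational identity.
-/

open scoped Nat

noncomputable def polyIntegral : ℝ[X] →ₗ[ℝ] ℝ where
  toFun p := ∫ x in (-1 : ℝ)..1, p.eval x
  map_add' p q := by
    simpa only [eval_add] using intervalIntegral.integral_add
      (p.continuous.intervalIntegrable _ _) (q.continuous.intervalIntegrable _ _)
  map_smul' c p := by
    simp only [eval_smul, smul_eq_mul, intervalIntegral.integral_const_mul, RingHom.id_apply]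

lemma polyIntegral_apply (p : ℝ[X]) : polyIntegral p = ∫ x in (-1 : ℝ)..1, p.eval x := rfl

lemma polyIntegral_C_mul (c : ℝ) (p : ℝ[X]) : polyIntegral (C c * p) = c * polyIntegral p := by
  rw [← smul_eq_C_mul, map_smul, smul_eq_mul]

lemma polyIntegral_mul_derivative (p q : ℝ[X]) :
    polyIntegral (p * derivative q) =
      p.eval 1 * q.eval 1 - p.eval (-1) * q.eval (-1) - polyIntegral (derivative p * q) := by
  simp only [polyIntegral_apply, eval_mul]
  exact intervalIntegral.integral_mul_deriv_eq_deriv_mul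
    (fun x _ => p.hasDerivAt x) (fun x _ => q.hasDerivAt x)
    (p.derivative.continuous.intervalIntegrable _ _)
    (q.derivative.continuous.intervalIntegrable _ _)

lemma eval_iterate_derivative_X_sq_sub_one_pow_of_lt {n k : ℕ} (hk : k < n) {x : ℝ}
    (hx : x ^ 2 = 1) : (derivative^[k] ((X ^ 2 - 1 : ℝ[X]) ^ n)).eval x = 0 := by
  obtain ⟨q, hq⟩ := pow_sub_dvd_iterate_derivative_pow (X ^ 2 - 1 : ℝ[X]) n k
  rw [hq, eval_mul, eval_pow]
  simp [hx, Nat.sub_ne_zero_of_lt hk]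

lemma polyIntegral_mul_iterate_derivative_X_sq_sub_one_pow (p : ℝ[X]) (n : ℕ) :
    polyIntegral (p * derivative^[n] ((X ^ 2 - 1) ^ n)) =
      (-1) ^ n * polyIntegral (derivative^[n] p * (X ^ 2 - 1) ^ n) := by
  suffices h : ∀ j k, k + j = n → polyIntegral (p * derivative^[k + j] ((X ^ 2 - 1) ^ n)) =
      (-1) ^ j * polyIntegral (derivative^[j] p * derivative^[k] ((X ^ 2 - 1) ^ n)) by
    simpa using h n 0 (zero_add n)
  intro j
  induction j with
  | zero => simp
  | succ j ih =>
    intro k hkj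
    rw [show k + (j + 1) = k + 1 + j by ring, ih (k + 1) (by omega),
      Function.iterate_succ_apply', polyIntegral_mul_derivative,
      eval_iterate_derivative_X_sq_sub_one_pow_of_lt (by omega) (by norm_num),
      eval_iterate_derivative_X_sq_sub_one_pow_of_lt (by omega) (by norm_num),
      ← Function.iterate_succ_apply' derivative, pow_succ]
    ring

lemma iterate_derivative_X_sq_sub_one_pow_self (n : ℕ) :
    derivative^[2 * n] ((X ^ 2 - 1 : ℝ[X]) ^ n) = C ((2 * n)! : ℝ) := by
  have hX : (X ^ 2 - 1 : ℝ[X]) = X ^ 2 - C 1 := by rw [C_1]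
  have hmonic : (X ^ 2 - C 1 : ℝ[X]).Monic := monic_X_pow_sub_C 1 two_ne_zero
  have hdeg : ((X ^ 2 - C 1 : ℝ[X]) ^ n).natDegree = 2 * n := by
    rw [hmonic.natDegree_pow, natDegree_X_pow_sub_C, mul_comm]
  rw [hX, eq_C_of_natDegree_le_zero ((natDegree_iterate_derivative _ _).trans (by omega)),
    coeff_iterate_derivative, zero_add, ← hdeg, (hmonic.pow n).coeff_natDegree, hdeg,
    Nat.descFactorial_self, nsmul_one]

lemma polyIntegral_X_sq_sub_one_pow_succ (n : ℕ) :
    (2 * n + 3) * polyIntegral ((X ^ 2 - 1 : ℝ[X]) ^ (n + 1)) =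
      -(2 * (n + 1)) * polyIntegral ((X ^ 2 - 1 : ℝ[X]) ^ n) := by
  have hibp := polyIntegral_mul_derivative ((X ^ 2 - 1 : ℝ[X]) ^ (n + 1)) X
  -- `X ^ 2 = (X ^ 2 - 1) + 1` turns `X · ((X ^ 2 - 1) ^ (n + 1))'` back into the integrands
  have hder : derivative ((X ^ 2 - 1 : ℝ[X]) ^ (n + 1)) * X =
      C (2 * (n + 1 : ℝ)) * ((X ^ 2 - 1) ^ (n + 1) + (X ^ 2 - 1) ^ n) := by
    rw [derivative_pow, Nat.add_sub_cancel, derivative_sub, derivative_X_pow, derivative_one]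
    simp only [map_mul, map_add, map_natCast, map_one, C_ofNat, pow_succ]
    push_cast
    ring
  rw [derivative_X, mul_one, hder, polyIntegral_C_mul, map_add] at hibp
  simp only [eval_pow, eval_sub, eval_X, eval_one] at hibp
  norm_num at hibp
  linear_combination hibp

lemma polyIntegral_X_sq_sub_one_pow (n : ℕ) :
    ((2 * n + 1)! : ℝ) * polyIntegral ((X ^ 2 - 1 : ℝ[X]) ^ n) =
      (-1) ^ n * 2 ^ (2 * n + 1) * (n ! : ℝ) ^ 2 := by
  induction n with
  | zero => norm_num [polyIntegral_apply]
  | succ n ih =>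
    have hfac : ((2 * (n + 1) + 1)! : ℝ) = (2 * n + 2) * (2 * n + 1)! * (2 * n + 3) := by
      rw [show 2 * (n + 1) + 1 = 2 * n + 1 + 1 + 1 by ring, Nat.factorial_succ,
        Nat.factorial_succ]
      push_cast; ring
    rw [hfac, mul_assoc, polyIntegral_X_sq_sub_one_pow_succ, Nat.factorial_succ n]
    push_cast
    linear_combination (-(2 * (n : ℝ) + 2) * 2 * (n + 1)) * ih

lemma legendre_natDegree_le (n : ℕ) : (legendre n).natDegree ≤ n :=
  (natDegree_C_mul_le _ _).trans <| (natDegree_iterate_derivative _ _).trans <| by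
    rw [natDegree_pow, natDegree_sub_eq_left_of_natDegree_lt (by simp), natDegree_X_pow]
    omega

lemma polyIntegral_mul_legendre_eq_zero {p : ℝ[X]} {n : ℕ} (h : p.natDegree < n) :
    polyIntegral (p * legendre n) = 0 := by
  rw [legendre, mul_left_comm, polyIntegral_C_mul,
    polyIntegral_mul_iterate_derivative_X_sq_sub_one_pow, iterate_derivative_eq_zero h]
  simp

lemma polyIntegral_legendre_mul_self (n : ℕ) :
    polyIntegral (legendre n * legendre n) = 2 / (2 * n + 1) := by
  have hfac : ((2 * n + 1)! : ℝ) = (2 * n + 1) * (2 * n)! := by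
    rw [Nat.factorial_succ]; push_cast; ring
  have hJ := polyIntegral_X_sq_sub_one_pow n
  nth_rewrite 2 [legendre]
  rw [mul_left_comm, polyIntegral_C_mul, polyIntegral_mul_iterate_derivative_X_sq_sub_one_pow,
    legendre, iterate_derivative_C_mul, ← Function.iterate_add_apply, ← two_mul,
    iterate_derivative_X_sq_sub_one_pow_self, ← C_mul, polyIntegral_C_mul]
  rw [hfac] at hJ
  have hsign : ((-1 : ℝ) ^ n) ^ 2 = 1 := by rw [← pow_mul, pow_mul']; simp
  field_simp
  linear_combination (-1) ^ n * hJ + 2 ^ (2 * n + 1) * (n ! : ℝ) ^ 2 * hsign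

lemma polyIntegral_legendre_mul_legendre (m n : ℕ) :
    polyIntegral (legendre m * legendre n) = if m = n then (2 / (2 * n + 1) : ℝ) else 0 := by
  rcases lt_trichotomy m n with h | rfl | h
  · rw [if_neg h.ne, polyIntegral_mul_legendre_eq_zero ((legendre_natDegree_le m).trans_lt h)]
  · rw [if_pos rfl, polyIntegral_legendre_mul_self]
  · rw [if_neg h.ne', mul_comm,
      polyIntegral_mul_legendre_eq_zero ((legendre_natDegree_le n).trans_lt h)]

lemma eval_iterate_derivative_X_sub_C_pow_mul {R : Type*} [CommRing R] (a : R) (n k : ℕ)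
    (q : R[X]) : (derivative^[n + k] ((X - C a) ^ n * q)).eval a =
      ((n + k).choose n * n ! : R) * (derivative^[k] q).eval a := by
  rw [iterate_derivative_mul, eval_finsetSum,
    Finset.sum_eq_single_of_mem k (Finset.mem_range.2 (by omega))]
  · rw [Nat.add_sub_cancel, iterate_derivative_X_sub_pow_self, eval_smul, eval_mul,
      ← Nat.choose_symm_add, nsmul_eq_mul]
    simp [mul_assoc]
  · intro l hl hlk
    rw [Finset.mem_range] at hl
    rw [iterate_derivative_X_sub_pow, eval_smul, eval_mul, eval_smul, eval_pow, eval_sub, eval_X,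
      eval_C, sub_self]
    rcases lt_or_gt_of_ne hlk with h | h
    · rw [Nat.descFactorial_eq_zero_iff_lt.2 (by omega)]
      simp
    · rw [zero_pow (by omega)]
      simp

lemma X_sq_sub_one_eq_mul : (X ^ 2 - 1 : ℝ[X]) = (X - C 1) * (X - C (-1)) := by
  simp only [map_neg, map_one]; ring

lemma legendre_eval_one (n : ℕ) : (legendre n).eval 1 = 1 := by
  have h := eval_iterate_derivative_X_sub_C_pow_mul (1 : ℝ) n 0 ((X - C (-1)) ^ n)
  rw [add_zero, ← mul_pow, ← X_sq_sub_one_eq_mul] at h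
  rw [legendre, eval_mul, eval_C, h]
  simp only [Nat.choose_self, Function.iterate_zero_apply, eval_pow, eval_sub, eval_X, eval_C]
  rw [show (1 - -1 : ℝ) = 2 by norm_num]
  field_simp
  push_cast
  ring

lemma legendre_eval_neg_one (n : ℕ) : (legendre n).eval (-1) = (-1) ^ n := by
  have h := eval_iterate_derivative_X_sub_C_pow_mul (-1 : ℝ) n 0 ((X - C 1) ^ n)
  rw [add_zero, ← mul_pow, mul_comm, ← X_sq_sub_one_eq_mul] at h
  rw [legendre, eval_mul, eval_C, h]
  simp only [Nat.choose_self, Function.iterate_zero_apply, eval_pow, eval_sub, eval_X, eval_C]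
  rw [show (-1 - 1 : ℝ) = -1 * 2 by norm_num, mul_pow]
  field_simp
  push_cast
  ring

lemma derivative_legendre_eval_one (n : ℕ) :
    (derivative (legendre n)).eval 1 = n * (n + 1) / 2 := by
  have h := eval_iterate_derivative_X_sub_C_pow_mul (1 : ℝ) n 1 ((X - C (-1)) ^ n)
  rw [← mul_pow, ← X_sq_sub_one_eq_mul, Function.iterate_one, derivative_X_sub_C_pow] at h
  rw [legendre, derivative_C_mul, ← Function.iterate_succ_apply' derivative, eval_mul, eval_C, h]
  simp only [Nat.choose_succ_self_right, eval_mul, eval_C, eval_pow, eval_sub, eval_X]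
  rcases n with _ | n
  · simp
  · rw [show (1 - -1 : ℝ) = 2 by norm_num, Nat.add_sub_cancel, pow_succ]
    field_simp
    push_cast
    ring

lemma derivative_legendre_eval_neg_one (n : ℕ) :
    (derivative (legendre n)).eval (-1) = -(-1) ^ n * (n * (n + 1) / 2) := by
  have h := eval_iterate_derivative_X_sub_C_pow_mul (-1 : ℝ) n 1 ((X - C 1) ^ n)
  rw [← mul_pow, mul_comm, ← X_sq_sub_one_eq_mul, Function.iterate_one,
    derivative_X_sub_C_pow] at h
  rw [legendre, derivative_C_mul, ← Function.iterate_succ_apply' derivative, eval_mul, eval_C, h]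
  simp only [Nat.choose_succ_self_right, eval_mul, eval_C, eval_pow, eval_sub, eval_X]
  rcases n with _ | n
  · simp
  · rw [show (-1 - 1 : ℝ) = -1 * 2 by norm_num, Nat.add_sub_cancel, mul_pow, pow_succ,
      pow_succ (-1 : ℝ)]
    field_simp
    push_cast
    ring

lemma derivative_legendre_zero : derivative (legendre 0) = 0 := by
  simp [legendre]

lemma polyIntegral_derivative_legendre_mul_of_le {m n : ℕ} (hmn : m ≤ n) :
    polyIntegral (derivative (legendre m) * derivative (legendre n)) =
      m * (m + 1) / 2 * (1 + (-1) ^ (m + n)) := by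
  rcases Nat.eq_zero_or_pos n with rfl | hn
  · simp [Nat.le_zero.1 hmn, derivative_legendre_zero]
  have hdeg : (derivative (derivative (legendre m))).natDegree < n := by
    have h1 := natDegree_derivative_le (derivative (legendre m))
    have h2 := natDegree_derivative_le (legendre m)
    have h3 := legendre_natDegree_le m
    omega
  rw [polyIntegral_mul_derivative, polyIntegral_mul_legendre_eq_zero hdeg,
    derivative_legendre_eval_one, derivative_legendre_eval_neg_one, legendre_eval_one,
    legendre_eval_neg_one, pow_add]
  ring

lemma polyIntegral_derivative_legendre_mul (m n : ℕ) :
    polyIntegral (derivative (legendre m) * derivative (legendre n)) =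
      (min m n : ℕ) * ((min m n : ℕ) + 1) / 2 * (1 + (-1) ^ (m + n)) := by
  rcases le_total m n with h | h
  · rw [min_eq_left h, polyIntegral_derivative_legendre_mul_of_le h]
  · rw [min_eq_right h, mul_comm, polyIntegral_derivative_legendre_mul_of_le h, add_comm m]

noncomputable def legendreDiff (n : ℕ) : ℝ[X] := legendre (n + 2) - legendre n

lemma polyIntegral_legendreDiff_mul (a b : ℕ) :
    polyIntegral (legendreDiff a * legendreDiff b) =
      polyIntegral (legendre (a + 2) * legendre (b + 2)) -
        polyIntegral (legendre (a + 2) * legendre b) -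
        polyIntegral (legendre a * legendre (b + 2)) + polyIntegral (legendre a * legendre b) := by
  simp only [legendreDiff, sub_mul, mul_sub, map_sub]
  ring

lemma polyIntegral_legendreDiff_mul_self (a : ℕ) :
    polyIntegral (legendreDiff a * legendreDiff a) = 2 / (2 * a + 1) + 2 / (2 * a + 5) := by
  simp [polyIntegral_legendreDiff_mul, polyIntegral_legendre_mul_legendre]
  ring

lemma polyIntegral_legendreDiff_mul_add_two (a : ℕ) :
    polyIntegral (legendreDiff a * legendreDiff (a + 2)) = -2 / (2 * a + 5) := by
  simp [polyIntegral_legendreDiff_mul, polyIntegral_legendre_mul_legendre, add_assoc]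
  ring

lemma polyIntegral_legendreDiff_mul_eq_zero {a b : ℕ} (hab : a ≠ b) (ha : a ≠ b + 2)
    (hb : b ≠ a + 2) : polyIntegral (legendreDiff a * legendreDiff b) = 0 := by
  simp [polyIntegral_legendreDiff_mul, polyIntegral_legendre_mul_legendre, hab, ha, hb.symm]

lemma Real.sqrt_div_two_div_sqrt_two_mul (a : ℝ) {b : ℝ} (hb : 0 ≤ b) :
    √(a / 2) / √(2 * b) = √(a / b) / 2 := by
  rw [← Real.sqrt_div' _ (by positivity), show a / 2 / (2 * b) = a / b / 2 ^ 2 by ring,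
    Real.sqrt_div' _ (by positivity), Real.sqrt_sq zero_le_two]

lemma psiF_succ (k : ℕ) (x : ℝ) :
    psiF (k + 1) x = (√(2 * (2 * k + 3)))⁻¹ * (legendreDiff k).eval x := by
  rw [psiF, legendreDiff, eval_sub, Nat.add_sub_cancel]
  push_cast
  ring_nf

lemma deriv_phiF (n : ℕ) (x : ℝ) :
    deriv (phiF n) x = √((2 * n + 1) / 2) * (derivative (legendre n)).eval x :=
  (((legendre n).hasDerivAt x).const_mul _).deriv

lemma massMatrix_apply (N : ℕ) (i k : Fin (N - 1)) :
    massMatrix N i k = (√(2 * (2 * (k : ℕ) + 3)))⁻¹ * (√(2 * (2 * (i : ℕ) + 3)))⁻¹ *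
      polyIntegral (legendreDiff k * legendreDiff i) := by
  simp only [massMatrix, Matrix.of_apply, psiF_succ, polyIntegral_apply, eval_mul]
  rw [← intervalIntegral.integral_const_mul]
  congr 1 with x
  ring

lemma stiffMatrix_apply (N : ℕ) (k j : Fin (N - 1)) :
    stiffMatrix N k j = √((2 * (j : ℕ) + 3) / 2) * √((2 * (k : ℕ) + 3) / 2) *
      polyIntegral (derivative (legendre (j + 1)) * derivative (legendre (k + 1))) := by
  simp only [stiffMatrix, Matrix.of_apply, deriv_phiF, polyIntegral_apply, eval_mul]
  rw [← intervalIntegral.integral_const_mul]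
  congr 1 with x
  push_cast
  ring_nf

lemma massMatrix_mul_stiffMatrix_apply (N : ℕ) (i j : Fin (N - 1)) :
    (massMatrix N * stiffMatrix N) i j = √((2 * (j : ℕ) + 3) / (2 * (i : ℕ) + 3)) / 4 *
      ∑ k ∈ Finset.range (N - 1), polyIntegral (legendreDiff k * legendreDiff i) *
        polyIntegral (derivative (legendre (j + 1)) * derivative (legendre (k + 1))) := by
  rw [Matrix.mul_apply, Finset.mul_sum, ← Fin.sum_univ_eq_sum_range]
  refine Finset.sum_congr rfl fun k _ => ?_
  have hk := Real.sqrt_div_two_div_sqrt_two_mul (2 * (k : ℕ) + 3 : ℝ)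
    (b := 2 * (k : ℕ) + 3) (by positivity)
  have hij := Real.sqrt_div_two_div_sqrt_two_mul (2 * (j : ℕ) + 3 : ℝ)
    (b := 2 * (i : ℕ) + 3) (by positivity)
  rw [div_self (show (2 * ((k : ℕ) : ℝ) + 3) ≠ 0 by positivity), Real.sqrt_one] at hk
  calc massMatrix N i k * stiffMatrix N k j
      = √((2 * (k : ℕ) + 3) / 2) / √(2 * (2 * (k : ℕ) + 3)) *
          (√((2 * (j : ℕ) + 3) / 2) / √(2 * (2 * (i : ℕ) + 3))) *
          (polyIntegral (legendreDiff k * legendreDiff i) *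
            polyIntegral (derivative (legendre (j + 1)) * derivative (legendre (k + 1)))) := by
        rw [massMatrix_apply, stiffMatrix_apply]
        ring
    _ = _ := by
        rw [hk, hij]
        ring

lemma sum_range_polyIntegral_legendreDiff_mul_of_lt_two {n i j : ℕ} (hi : i < 2) (hin : i < n)
    (hn : n ≤ i + 2) (hj : j < n) :
    ∑ k ∈ Finset.range n, polyIntegral (legendreDiff k * legendreDiff i) *
        polyIntegral (derivative (legendre (j + 1)) * derivative (legendre (k + 1))) =
      4 * (if i = j then 1 else 0) + (1 + (-1) ^ (i + j)) * ((j + 1) * (j + 2) / (2 * i + 5)) := by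
  rw [Finset.sum_eq_single_of_mem i (Finset.mem_range.2 hin) fun k hk hki => by
    rw [polyIntegral_legendreDiff_mul_eq_zero hki (by rw [Finset.mem_range] at hk; omega)
      (by omega), zero_mul],
    polyIntegral_legendreDiff_mul_self, polyIntegral_derivative_legendre_mul]
  have hj' : j ≤ i + 1 := by omega
  interval_cases i <;> interval_cases j <;> norm_num

lemma sum_range_polyIntegral_legendreDiff_mul_of_two_le {n i j : ℕ} (hi : 2 ≤ i) (hin : i < n)
    (hn : n ≤ i + 2) (hj : j < n) :
    ∑ k ∈ Finset.range n, polyIntegral (legendreDiff k * legendreDiff i) *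
        polyIntegral (derivative (legendre (j + 1)) * derivative (legendre (k + 1))) =
      4 * (if i = j then 1 else 0) + (1 + (-1) ^ (i + j)) * ((j + 1) * (j + 2) / (2 * i + 5)) := by
  obtain ⟨a, rfl⟩ := Nat.exists_eq_add_of_le' hi
  rw [Finset.sum_eq_add_of_mem a (a + 2) (Finset.mem_range.2 (by omega)) (Finset.mem_range.2 hin)
    (by omega) fun k hk hka => by
      rw [polyIntegral_legendreDiff_mul_eq_zero hka.2 (by rw [Finset.mem_range] at hk; omega)
        (by omega), zero_mul],
    polyIntegral_legendreDiff_mul_add_two, polyIntegral_legendreDiff_mul_self,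
    polyIntegral_derivative_legendre_mul, polyIntegral_derivative_legendre_mul]
  have e1 : (-1 : ℝ) ^ (j + 1 + (a + 1)) = (-1) ^ (a + 2 + j) := by
    rw [show j + 1 + (a + 1) = a + 2 + j by ring]
  have e2 : (-1 : ℝ) ^ (j + 1 + (a + 2 + 1)) = (-1) ^ (a + 2 + j) := by
    rw [show j + 1 + (a + 2 + 1) = a + 2 + j + 2 by ring, pow_add]; norm_num
  rw [e1, e2]
  rcases Nat.even_or_odd (a + 2 + j) with hpar | hpar
  · rw [hpar.neg_one_pow]
    obtain ⟨c, hc⟩ := hpar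
    rcases eq_or_ne (a + 2) j with rfl | hij
    · rw [if_pos rfl, min_eq_right (by omega), min_eq_right (by omega)]
      push_cast
      field_simp
      ring
    · rw [if_neg hij, min_eq_left (by omega), min_eq_left (by omega)]
      push_cast
      field_simp
      ring
  · rw [hpar.neg_one_pow, if_neg (by rintro rfl; exact Nat.not_odd_iff_even.2 (by simp) hpar)]
    ring

lemma massMatrix_mul_stiffMatrix_apply_of_le {N : ℕ} (i j : Fin (N - 1))
    (hi : N ≤ (i : ℕ) + 3) :
    (massMatrix N * stiffMatrix N) i j = (if i = j then 1 else 0) +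
      1 / 4 * √((2 * (j : ℕ) + 3) / (2 * (i : ℕ) + 3)) *
        (((j : ℕ) + 1) * ((j : ℕ) + 2) / (2 * (i : ℕ) + 5)) *
        (1 + (-1) ^ ((i : ℕ) + j)) := by
  have hsum := if h : (i : ℕ) < 2 then
      sum_range_polyIntegral_legendreDiff_mul_of_lt_two h i.isLt (by omega) j.isLt
    else sum_range_polyIntegral_legendreDiff_mul_of_two_le (by omega) i.isLt (by omega) j.isLt
  rw [massMatrix_mul_stiffMatrix_apply, hsum]
  rcases eq_or_ne i j with rfl | hij
  · rw [if_pos rfl, if_pos rfl, div_self (by positivity), Real.sqrt_one]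
    ring
  · rw [if_neg (Fin.val_ne_of_ne hij), if_neg hij]
    ring

theorem mass_stiff_last_rows_general (N : ℕ) (i j : Fin (N - 1)) :
    ((i : ℕ) + 1 = N - 2 →
      (massMatrix N * stiffMatrix N) i j =
        (if i = j then 1 else 0) +
          1 / 4 * Real.sqrt ((2 * ((j : ℕ) : ℝ) + 3) / (2 * (N : ℝ) - 3)) *
            ((((j : ℕ) : ℝ) + 1) * (((j : ℕ) : ℝ) + 2) / (2 * (N : ℝ) - 1)) *
            (1 + (-1 : ℝ) ^ ((j : ℕ) + 1 + N))) ∧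
    ((i : ℕ) + 1 = N - 1 →
      (massMatrix N * stiffMatrix N) i j =
        (if i = j then 1 else 0) +
          1 / 4 * Real.sqrt ((2 * ((j : ℕ) : ℝ) + 3) / (2 * (N : ℝ) - 1)) *
            ((((j : ℕ) : ℝ) + 1) * (((j : ℕ) : ℝ) + 2) / (2 * (N : ℝ) + 1)) *
            (1 + (-1 : ℝ) ^ ((j : ℕ) + 1 + N + 1))) := by
  have hiN := i.isLt
  constructor
  · intro h
    have hi : ((i : ℕ) : ℝ) = N - 3 := by
      rw [eq_sub_iff_add_eq]; exact_mod_cast (by omega : (i : ℕ) + 3 = N)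
    rw [massMatrix_mul_stiffMatrix_apply_of_le i j (by omega), hi,
      show (j : ℕ) + 1 + N = (i : ℕ) + j + 2 * 2 by omega, pow_add _ _ (2 * 2), pow_mul]
    ring_nf
  · intro h
    have hi : ((i : ℕ) : ℝ) = N - 2 := by
      rw [eq_sub_iff_add_eq]; exact_mod_cast (by omega : (i : ℕ) + 2 = N)
    rw [massMatrix_mul_stiffMatrix_apply_of_le i j (by omega), hi,
      show (j : ℕ) + 1 + N + 1 = (i : ℕ) + j + 2 * 2 by omega, pow_add _ _ (2 * 2), pow_mul]
    ring_nf

/-- The last two rows of `MS`: for `1 ≤ n ≤ N−1`,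
`(MS)_{(N−2)n} = δ_{(N−2)n} + (1/4)√((2n+1)/(2N−3))(n(n+1)/(2N−1))(1+(−1)^{n+N})` and
`(MS)_{(N−1)n} = δ_{(N−1)n} + (1/4)√((2n+1)/(2N−1))(n(n+1)/(2N+1))(1+(−1)^{n+N+1})`. -/
theorem mass_stiff_last_rows (N : ℕ) (hN : 4 ≤ N) (i j : Fin (N - 1)) :
    ((i : ℕ) + 1 = N - 2 →
      (massMatrix N * stiffMatrix N) i j =
        (if i = j then 1 else 0) +
          1 / 4 * Real.sqrt ((2 * ((j : ℕ) : ℝ) + 3) / (2 * (N : ℝ) - 3)) *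
            ((((j : ℕ) : ℝ) + 1) * (((j : ℕ) : ℝ) + 2) / (2 * (N : ℝ) - 1)) *
            (1 + (-1 : ℝ) ^ ((j : ℕ) + 1 + N))) ∧
    ((i : ℕ) + 1 = N - 1 →
      (massMatrix N * stiffMatrix N) i j =
        (if i = j then 1 else 0) +
          1 / 4 * Real.sqrt ((2 * ((j : ℕ) : ℝ) + 3) / (2 * (N : ℝ) - 1)) *
            ((((j : ℕ) : ℝ) + 1) * (((j : ℕ) : ℝ) + 2) / (2 * (N : ℝ) + 1)) *
            (1 + (-1 : ℝ) ^ ((j : ℕ) + 1 + N + 1))) :=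
  mass_stiff_last_rows_general N i j
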